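/- arXiv:0811.0734 — 3 statements merged into one kernel-verified Lean document; each statement's English description precedes it below -/
import Mathlib

section
/- Let δ > 0 and let f : [0,T] → ℝ be C¹ with f(0) = 0 and satisfying the differential inequality f'(t) + 4 f(t)² ≥ 4δ² for all t ∈ [0,T]. Then for all t ∈ [0,T], f(t) ≥ δ − 2δ/(1 + e^{8δt}). -/
open Real Set

/-- **Riccati-type differential inequality lower bound.**
If `f` is C¹ on `[0,T]` with `f 0 = 0` and `f' + 4 f² ≥ 4 δ²` on `[0,T]`,
then `f t ≥ δ - 2δ/(1 + e^{8δt})` on `[0,T]`. -/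
theorem riccati_lower_bound (δ T : ℝ) (hδ : 0 < δ) (hT : 0 < T)
    (f : ℝ → ℝ) (hf : ContDiff ℝ 1 f) (hf0 : f 0 = 0)
    (hineq : ∀ t ∈ Icc (0:ℝ) T, 4 * δ ^ 2 ≤ deriv f t + 4 * (f t) ^ 2) :
    ∀ t ∈ Icc (0:ℝ) T, δ - 2 * δ / (1 + Real.exp (8 * δ * t)) ≤ f t := by
  set g : ℝ → ℝ := fun s => δ - 2 * δ / (1 + Real.exp (8 * δ * s)) with hgdef
  have hden : ∀ s : ℝ, 0 < 1 + Real.exp (8 * δ * s) := fun s => by positivity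
  -- g solves the Riccati equation
  have hgd : ∀ s : ℝ, HasDerivAt g (4 * δ ^ 2 - 4 * (g s) ^ 2) s := by
    intro s
    have h1 : HasDerivAt (fun u : ℝ => 8 * δ * u) (8 * δ) s := by
      simpa using (hasDerivAt_id s).const_mul (8 * δ)
    have h2 : HasDerivAt (fun u : ℝ => Real.exp (8 * δ * u))
        (Real.exp (8 * δ * s) * (8 * δ)) s := (Real.hasDerivAt_exp _).comp s h1
    have h3 : HasDerivAt (fun u : ℝ => 1 + Real.exp (8 * δ * u))
        (Real.exp (8 * δ * s) * (8 * δ)) s := by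
      exact h2.const_add 1
    have h4 : HasDerivAt (fun u : ℝ => 2 * δ / (1 + Real.exp (8 * δ * u)))
        ((0 * (1 + Real.exp (8 * δ * s)) - 2 * δ * (Real.exp (8 * δ * s) * (8 * δ))) /
          (1 + Real.exp (8 * δ * s)) ^ 2) s :=
      (hasDerivAt_const s (2 * δ)).div h3 (ne_of_gt (hden s))
    have h5 := (hasDerivAt_const s δ).sub h4
    refine h5.congr_deriv ?_
    have hne := ne_of_gt (hden s)
    simp only [hgdef]
    field_simp
    ring
  have hgcont : Continuous g := by
    rw [continuous_iff_continuousAt]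
    exact fun s => (hgd s).continuousAt
  have hfd : ∀ s : ℝ, HasDerivAt f (deriv f s) s :=
    fun s => ((hf.differentiable one_ne_zero) s).hasDerivAt
  set A : ℝ → ℝ := fun s => ∫ u in (0:ℝ)..s, 4 * (f u + g u) with hAdef
  have hcont : Continuous (fun u => 4 * (f u + g u)) :=
    continuous_const.mul (hf.continuous.add hgcont)
  have hA : ∀ s : ℝ, HasDerivAt A (4 * (f s + g s)) s := by
    intro s
    exact (hcont.integral_hasStrictDerivAt 0 s).hasDerivAt
  set F : ℝ → ℝ := fun s => (f s - g s) * Real.exp (A s) with hFdef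
  have hFd : ∀ s : ℝ, HasDerivAt F
      ((deriv f s - (4 * δ ^ 2 - 4 * (g s) ^ 2)) * Real.exp (A s) +
        (f s - g s) * (Real.exp (A s) * (4 * (f s + g s)))) s :=
    fun s => ((hfd s).sub (hgd s)).mul ((hA s).exp)
  have hmono : MonotoneOn F (Icc 0 T) := by
    apply monotoneOn_of_deriv_nonneg (convex_Icc 0 T)
    · exact fun s _ => ((hFd s).continuousAt).continuousWithinAt
    · exact fun s _ => ((hFd s).differentiableAt).differentiableWithinAt
    · intro s hs
      rw [interior_Icc] at hs
      rw [(hFd s).deriv]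
      have hineqs := hineq s ⟨le_of_lt hs.1, le_of_lt hs.2⟩
      have hpos : 0 < Real.exp (A s) := Real.exp_pos _
      have : (deriv f s - (4 * δ ^ 2 - 4 * (g s) ^ 2)) * Real.exp (A s) +
          (f s - g s) * (Real.exp (A s) * (4 * (f s + g s))) =
          (deriv f s + 4 * (f s) ^ 2 - 4 * δ ^ 2) * Real.exp (A s) := by ring
      rw [this]
      apply mul_nonneg _ (le_of_lt hpos)
      linarith
  intro t ht
  have h0 : (0:ℝ) ∈ Icc (0:ℝ) T := ⟨le_rfl, le_of_lt hT⟩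
  have hF0 : F 0 = 0 := by
    have hg0 : g 0 = 0 := by
      simp only [hgdef]
      norm_num
    simp [hFdef, hf0, hg0]
  have := hmono h0 ht ht.1
  rw [hF0] at this
  have hexp : 0 < Real.exp (A t) := Real.exp_pos _
  have hge : g t ≤ f t := by
    by_contra hlt
    push_neg at hlt
    have : F t < 0 := mul_neg_of_neg_of_pos (by linarith) hexp
    linarith
  simpa [hgdef] using hge
end

section
/- Let C_L > 0 and set, for small h > 0 and integers N ≥ 1, k = h·log(1/h) and M = 2⌊ N k / (C'_L h) ⌋ where C'_L > 4 C_L². Then C_L^{M+1} (hM/(Nk))^{M/2} ≤ 2 C_L · h^{δ_L N} with δ_L := (log 2)/C'_L, and moreover Σ_{m=0}^{M} C_L^{m+1} (hm/(Nk))^{m/2} ≤ (√2/(√2 − 1)) · C_L. -/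
open Real Finset

/-- Bounds on the remainder terms of a truncated Laplace expansion: with
`k = h log(1/h)`, `M = 2⌊Nk/(C'_L h)⌋` and `C'_L > 4C_L²`, one has
`C_L^{M+1}(hM/(Nk))^{M/2} ≤ 2C_L h^{δ_L N}` where `δ_L = (log 2)/C'_L`, and
`Σ_{m=0}^M C_L^{m+1}(hm/(Nk))^{m/2} ≤ (√2/(√2-1)) C_L`. -/
theorem laplace_remainder_bounds (CL CL' : ℝ) (hCL : 0 < CL) (hCL' : 4 * CL^2 < CL')
    (h : ℝ) (hh0 : 0 < h) (hh1 : h < 1) (N : ℕ) (hN : 1 ≤ N)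
    (k : ℝ) (hk : k = h * Real.log (1/h))
    (M : ℕ) (hM : M = 2 * ⌊(N * k) / (CL' * h)⌋₊) :
    CL ^ (M + 1) * ((h * M) / (N * k)) ^ ((M : ℝ) / 2)
        ≤ 2 * CL * h ^ ((Real.log 2 / CL') * N) ∧
    ∑ m ∈ range (M + 1), CL ^ (m + 1) * ((h * m) / (N * k)) ^ ((m : ℝ) / 2)
        ≤ (Real.sqrt 2 / (Real.sqrt 2 - 1)) * CL := by
  have hCL'0 : (0:ℝ) < CL' := by nlinarith [sq_nonneg CL]
  have hlogh : 0 < Real.log (1/h) := Real.log_pos (by rw [lt_div_iff₀ hh0]; linarith)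
  have hk0 : 0 < k := by rw [hk]; exact mul_pos hh0 hlogh
  have hN0 : (0:ℝ) < (N:ℝ) := by
    have : 0 < N := by omega
    exact_mod_cast this
  have hNk : (0:ℝ) < (N:ℝ) * k := mul_pos hN0 hk0
  set x : ℝ := ((N:ℝ) * k) / (CL' * h) with hxdef
  have hx0 : 0 ≤ x := by positivity
  set L : ℕ := ⌊x⌋₊ with hLdef
  have hLx : (L:ℝ) ≤ x := Nat.floor_le hx0
  have hxL : x < (L:ℝ) + 1 := Nat.lt_floor_add_one x
  have hMcast : (M:ℝ) = 2 * (L:ℝ) := by rw [hM]; push_cast; ring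
  have hratio : h * (M:ℝ) / ((N:ℝ)*k) ≤ 2 / CL' := by
    rw [div_le_div_iff₀ hNk hCL'0]
    have h1 : (L:ℝ) * (CL' * h) ≤ (N:ℝ)*k := by
      rw [← le_div_iff₀ (by positivity : (0:ℝ) < CL' * h)]
      exact hLx
    rw [hMcast]
    nlinarith [h1]
  set r : ℝ := (Real.sqrt 2)⁻¹ with hrdef
  have hs2 : Real.sqrt 2 ^ 2 = 2 := Real.sq_sqrt (by norm_num)
  have hs1 : 1 < Real.sqrt 2 := by nlinarith [Real.sqrt_nonneg 2]
  have hr0 : 0 ≤ r := by rw [hrdef]; positivity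
  have hr1 : r < 1 := by rw [hrdef]; exact inv_lt_one_of_one_lt₀ hs1
  have hhalf : ∀ m : ℕ, ((2:ℝ)⁻¹) ^ ((m:ℝ)/2) = r ^ m := by
    intro m
    rw [hrdef, ← Real.sqrt_inv, Real.sqrt_eq_rpow,
      ← Real.rpow_natCast ((2:ℝ)⁻¹ ^ ((1:ℝ)/2)) m, ← Real.rpow_mul (by norm_num)]
    congr 1
    ring
  have hCLpow : ∀ m : ℕ, ((CL^2 : ℝ)) ^ ((m:ℝ)/2) = CL ^ m := by
    intro m
    rw [← Real.rpow_natCast CL 2, ← Real.rpow_mul hCL.le, ← Real.rpow_natCast CL m]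
    congr 1
    push_cast
    ring
  have hterm : ∀ m : ℕ, m ≤ M →
      CL ^ (m + 1) * ((h * m) / ((N:ℝ) * k)) ^ ((m:ℝ) / 2) ≤ CL * r ^ m := by
    intro m hm
    have ha0 : 0 ≤ h * (m:ℝ) / ((N:ℝ)*k) := by positivity
    have hale : h * (m:ℝ) / ((N:ℝ)*k) ≤ 2 / CL' := by
      refine le_trans ?_ hratio
      gcongr
    have h2 : (h * (m:ℝ) / ((N:ℝ)*k)) * CL' ≤ 2 := (le_div_iff₀ hCL'0).mp hale
    have hkey : CL^2 * (h * (m:ℝ) / ((N:ℝ)*k)) ≤ 2⁻¹ := by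
      nlinarith [sq_nonneg CL, mul_nonneg (sq_nonneg CL) ha0,
        mul_le_mul_of_nonneg_left h2 (sq_nonneg CL)]
    calc CL ^ (m + 1) * ((h * m) / ((N:ℝ) * k)) ^ ((m:ℝ) / 2)
        = CL * (CL^2 * (h * m / ((N:ℝ)*k))) ^ ((m:ℝ)/2) := by
          rw [Real.mul_rpow (by positivity : (0:ℝ) ≤ CL^2) ha0, hCLpow m]
          ring
      _ ≤ CL * ((2:ℝ)⁻¹) ^ ((m:ℝ)/2) := by
          gcongr
      _ = CL * r ^ m := by rw [hhalf m]
  constructor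
  · -- first bound
    have hrM : r ^ M = (2:ℝ) ^ (-(L:ℝ)) := by
      rw [← hhalf M, hMcast, show (2*(L:ℝ))/2 = (L:ℝ) by ring,
        Real.inv_rpow (by norm_num), ← Real.rpow_neg (by norm_num)]
    have hxval : x = (N:ℝ) * Real.log (1/h) / CL' := by
      rw [hxdef, hk]
      field_simp
    have hhd : h ^ ((Real.log 2 / CL') * (N:ℝ)) = (2:ℝ) ^ (-x) := by
      rw [Real.rpow_def_of_pos hh0, Real.rpow_def_of_pos (by norm_num : (0:ℝ) < 2)]
      congr 1
      rw [hxval, one_div, Real.log_inv]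
      field_simp
    have hstep : (2:ℝ) ^ (-(L:ℝ)) ≤ 2 * (2:ℝ) ^ (-x) := by
      have h1 : (2:ℝ) ^ (-(L:ℝ)) ≤ (2:ℝ) ^ (1 - x) :=
        (Real.rpow_le_rpow_left_iff one_lt_two).mpr (by linarith)
      have h2 : (2:ℝ) ^ (1 - x) = 2 * (2:ℝ) ^ (-x) := by
        rw [show (1:ℝ) - x = 1 + (-x) by ring, Real.rpow_add (by norm_num), Real.rpow_one]
      linarith [h1, h2.le, h2.ge]
    calc CL ^ (M + 1) * ((h * M) / ((N:ℝ) * k)) ^ ((M:ℝ) / 2)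
        ≤ CL * r ^ M := hterm M le_rfl
      _ = CL * (2:ℝ) ^ (-(L:ℝ)) := by rw [hrM]
      _ ≤ CL * (2 * (2:ℝ) ^ (-x)) := by
          have := mul_le_mul_of_nonneg_left hstep hCL.le
          linarith
      _ = 2 * CL * h ^ ((Real.log 2 / CL') * (N:ℝ)) := by rw [hhd]; ring
  · -- sum bound
    have hgeom : ∑ m ∈ range (M+1), r ^ m ≤ (1-r)⁻¹ := by
      have hr1' : r ≠ 1 := ne_of_lt hr1
      rw [geom_sum_eq hr1']
      have heq : (r^(M+1) - 1)/(r-1) = (1 - r^(M+1))/(1-r) := by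
        rw [div_eq_div_iff (by linarith : r - 1 ≠ 0) (by
          have : (0:ℝ) < 1 - r := by linarith
          linarith : (1:ℝ) - r ≠ 0)]
        ring
      rw [heq, inv_eq_one_div]
      exact (div_le_div_iff_of_pos_right (by linarith : (0:ℝ) < 1 - r)).mpr
        (by nlinarith [pow_nonneg hr0 (M+1)])
    have hs0 : Real.sqrt 2 ≠ 0 := by positivity
    have hs1' : Real.sqrt 2 - 1 ≠ 0 := by linarith
    have hfin : CL * (1-r)⁻¹ = (Real.sqrt 2 / (Real.sqrt 2 - 1)) * CL := by
      rw [hrdef]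
      field_simp
    calc ∑ m ∈ range (M + 1), CL ^ (m + 1) * ((h * m) / ((N:ℝ) * k)) ^ ((m:ℝ) / 2)
        ≤ ∑ m ∈ range (M + 1), CL * r ^ m := by
          refine Finset.sum_le_sum fun m hm => hterm m ?_
          exact Nat.lt_succ_iff.mp (Finset.mem_range.mp hm)
      _ = CL * ∑ m ∈ range (M + 1), r ^ m := by rw [Finset.mul_sum]
      _ ≤ CL * (1-r)⁻¹ := mul_le_mul_of_nonneg_left hgeom hCL.le
      _ = (Real.sqrt 2 / (Real.sqrt 2 - 1)) * CL := hfin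
end

section
/- (Inverse of an almost-analytic extension) Let f ∈ C^∞(ℝ) be real-valued with f'(x₀) ≠ 0, and let f̃(z) be an almost-analytic extension of f. Then f̃ is injective on a neighborhood of x₀ in ℂ, and its local inverse g, defined near f(x₀), is an almost-analytic extension of f⁻¹: namely ∂̄g(ζ) = O(|Im ζ|^N) for every N, as Im ζ → 0. -/
open Real Set

/-- `g : ℂ → ℂ` is an almost-analytic extension of the real-valued `f : ℝ → ℝ`. -/
def IsAlmostAnalyticExtR (f : ℝ → ℝ) (g : ℂ → ℂ) : Prop :=
  ContDiff ℝ (⊤ : ℕ∞) g ∧ (∀ x : ℝ, g x = (f x : ℂ)) ∧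
  ∀ (α N : ℕ), ∃ C > (0:ℝ), ∀ z : ℂ, |z.im| ≤ 1 →
    ‖iteratedFDeriv ℝ α
        (fun w => fderiv ℝ g w 1 + Complex.I * fderiv ℝ g w Complex.I) z‖
      ≤ C * |z.im| ^ N

private lemma clm_decomp (B : ℂ →L[ℝ] ℂ) (w : ℂ) :
    B w = w.re • B 1 + w.im • B Complex.I := by
  have h : w = w.re • (1:ℂ) + w.im • Complex.I := by
    simp [Complex.real_smul, Complex.re_add_im]
  calc B w = B (w.re • (1:ℂ) + w.im • Complex.I) := by rw [← h]
  _ = _ := by rw [map_add, map_smul, map_smul]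

private lemma clm_ext' {A B : ℂ →L[ℝ] ℂ} (h1 : A 1 = B 1)
    (hI : A Complex.I = B Complex.I) : A = B := by
  ext w
  rw [clm_decomp A w, clm_decomp B w, h1, hI]

/-- **Inverse of an almost-analytic extension.** If `f : ℝ → ℝ` is smooth and real-valued
with `f'(x₀) ≠ 0` and `f̃` is an almost-analytic extension of `f`, then `f̃` is injective
near `x₀` in `ℂ`, and its local inverse `g` (defined near `f(x₀)`) is an almost-analytic
extension of `f⁻¹`: `∂̄g(ζ) = O(|Im ζ|^N)` for every `N` as `Im ζ → 0`. -/
theorem almost_analytic_extension_inverse (f : ℝ → ℝ) (hf : ContDiff ℝ (⊤ : ℕ∞) f)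
    (x₀ : ℝ) (hf' : deriv f x₀ ≠ 0)
    (ft : ℂ → ℂ) (hft : IsAlmostAnalyticExtR f ft) :
    ∃ U ∈ nhds (x₀ : ℂ), ∃ V ∈ nhds ((f x₀ : ℝ) : ℂ), ∃ g : ℂ → ℂ,
      Set.InjOn ft U ∧ ContDiffOn ℝ (⊤ : ℕ∞) g V ∧
      (∀ ζ ∈ V, g ζ ∈ U ∧ ft (g ζ) = ζ) ∧
      (∀ z ∈ U, ft z ∈ V → g (ft z) = z) ∧
      ∀ N : ℕ, ∃ C > (0:ℝ), ∀ ζ ∈ V,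
        ‖fderiv ℝ g ζ 1 + Complex.I * fderiv ℝ g ζ Complex.I‖ ≤ C * |ζ.im| ^ N := by
  obtain ⟨hsm, hreal, hest⟩ := hft
  set c₀ : ℝ := deriv f x₀ with hc₀def
  set c : ℝ := |c₀| with hcdef
  have hc : 0 < c := abs_pos.2 hf'
  have hdiff : Differentiable ℝ ft := hsm.differentiable (by simp)
  -- derivative of ft at x₀ in the direction 1
  have h1 : fderiv ℝ ft x₀ 1 = ((c₀ : ℝ) : ℂ) := by
    have hfd : HasFDerivAt (fun x : ℝ => (f x : ℂ))
        (Complex.ofRealCLM.comp (ContinuousLinearMap.smulRight (1 : ℝ →L[ℝ] ℝ) c₀)) x₀ :=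
      Complex.ofRealCLM.hasFDerivAt.comp x₀ ((hf.differentiable (by simp) x₀).hasDerivAt.hasFDerivAt)
    have hfd2 : HasFDerivAt (fun x : ℝ => ft x)
        ((fderiv ℝ ft x₀).comp Complex.ofRealCLM) x₀ :=
      (hdiff x₀).hasFDerivAt.comp x₀ Complex.ofRealCLM.hasFDerivAt
    have heq : (fun x : ℝ => ft x) = fun x : ℝ => (f x : ℂ) := funext fun x => hreal x
    rw [heq] at hfd2
    have h := hfd2.unique hfd
    have h2 := congrArg (fun (L : ℝ →L[ℝ] ℂ) => L 1) h
    simpa using h2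
  -- dbar ft vanishes at x₀
  have hd0 : fderiv ℝ ft x₀ 1 + Complex.I * fderiv ℝ ft x₀ Complex.I = 0 := by
    obtain ⟨C, hC, hb⟩ := hest 0 1
    have hb0 := hb (x₀ : ℂ) (by simp)
    rw [norm_iteratedFDeriv_zero] at hb0
    simp only [Complex.ofReal_im, abs_zero, pow_one, mul_zero] at hb0
    exact norm_le_zero_iff.1 hb0
  have hI : fderiv ℝ ft x₀ Complex.I = ((c₀ : ℝ) : ℂ) * Complex.I := by
    rw [h1] at hd0
    linear_combination (-Complex.I) * hd0 + (fderiv ℝ ft x₀ Complex.I) * Complex.I_sq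
  -- the multiplication-by-c₀ map
  set Lmul : ℂ →L[ℝ] ℂ := ContinuousLinearMap.mul ℝ ℂ ((c₀ : ℝ) : ℂ) with hLmul
  have hLapp : ∀ w : ℂ, Lmul w = ((c₀ : ℝ) : ℂ) * w := fun w => rfl
  set Linv : ℂ →L[ℝ] ℂ := ContinuousLinearMap.mul ℝ ℂ (((c₀ : ℝ) : ℂ)⁻¹) with hLinv
  have hc₀ : ((c₀ : ℝ) : ℂ) ≠ 0 := by exact_mod_cast hf'
  have hA0 : fderiv ℝ ft x₀ = Lmul := by
    refine clm_ext' ?_ ?_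
    · rw [h1, hLapp]; ring
    · rw [hI, hLapp]
  -- Lmul as a continuous linear equivalence
  set u : (ℂ →L[ℝ] ℂ)ˣ :=
    ⟨Lmul, Linv,
      by ext w; simp [ContinuousLinearMap.mul_apply, hLmul, hLinv, ← mul_assoc,
        mul_inv_cancel₀ hc₀],
      by ext w; simp [ContinuousLinearMap.mul_apply, hLmul, hLinv, ← mul_assoc,
        inv_mul_cancel₀ hc₀]⟩ with hu
  set E₀ : ℂ ≃L[ℝ] ℂ := ContinuousLinearEquiv.unitsEquiv ℝ ℂ u with hE₀
  have hE₀coe : (E₀ : ℂ →L[ℝ] ℂ) = Lmul := rfl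
  have hE : HasFDerivAt ft ((E₀ : ℂ →L[ℝ] ℂ)) x₀ := by
    rw [hE₀coe, ← hA0]
    exact (hdiff _).hasFDerivAt
  -- the partial homeomorphism given by the inverse function theorem
  set ph := hsm.contDiffAt.toOpenPartialHomeomorph ft hE (by simp) with hph
  have hph_coe : (ph : ℂ → ℂ) = ft := rfl
  have hx₀ : (x₀ : ℂ) ∈ ph.source :=
    ContDiffAt.mem_toOpenPartialHomeomorph_source hsm.contDiffAt hE (by simp)
  have hfx₀ : ft x₀ ∈ ph.target :=
    ContDiffAt.image_mem_toOpenPartialHomeomorph_target hsm.contDiffAt hE (by simp)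
  have hgx₀ : ph.symm (ft x₀) = (x₀ : ℂ) := by
    rw [← hph_coe]; exact ph.left_inv hx₀
  -- continuity of the derivative of ft
  have hcont : Continuous (fun w => fderiv ℝ ft w) := hsm.continuous_fderiv (by simp)
  -- choose the ball U
  have hmem : {w : ℂ | w ∈ ph.source ∧ ‖fderiv ℝ ft w - fderiv ℝ ft x₀‖ ≤ c / 2}
      ∈ nhds (x₀ : ℂ) := by
    refine Filter.inter_mem (ph.open_source.mem_nhds hx₀) ?_
    have h0 : ∀ᶠ w in nhds (x₀ : ℂ),
        fderiv ℝ ft w ∈ Metric.ball (fderiv ℝ ft x₀) (c / 2) :=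
      (hcont.continuousAt).preimage_mem_nhds
        (Metric.ball_mem_nhds _ (by positivity))
    exact h0.mono fun w hw => le_of_lt (by simpa [dist_eq_norm] using hw)
  obtain ⟨r₁, hr₁, hball₁⟩ := Metric.mem_nhds_iff.1 hmem
  set r : ℝ := min r₁ 1 with hrdef
  have hr : 0 < r := lt_min hr₁ one_pos
  set U : Set ℂ := Metric.ball (x₀ : ℂ) r with hU
  have hUsub : ∀ z ∈ U, z ∈ ph.source ∧ ‖fderiv ℝ ft z - fderiv ℝ ft x₀‖ ≤ c / 2 :=
    fun z hz => hball₁ (Metric.ball_subset_ball (min_le_left _ _) hz)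
  have hUim : ∀ z ∈ U, |z.im| ≤ 1 := by
    intro z hz
    have h1' : |(z - (x₀ : ℂ)).im| ≤ ‖z - (x₀ : ℂ)‖ := Complex.abs_im_le_norm _
    have h2' : ‖z - (x₀ : ℂ)‖ < r := by simpa [hU, dist_eq_norm] using hz
    have : (z - (x₀ : ℂ)).im = z.im := by simp
    rw [this] at h1'
    linarith [min_le_right r₁ 1, h1'.trans_lt h2']
  -- lower bound on the derivative in direction 1 on U
  have hU5 : ∀ z ∈ U, c / 2 ≤ ‖fderiv ℝ ft z 1‖ := by
    intro z hz
    have h2' := (hUsub z hz).2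
    have h3' : ‖(fderiv ℝ ft z - fderiv ℝ ft x₀) 1‖ ≤ c / 2 := by
      refine le_trans (le_trans ((fderiv ℝ ft z - fderiv ℝ ft x₀).le_opNorm 1) ?_) h2'
      simp
    have h4' : fderiv ℝ ft z 1 = fderiv ℝ ft x₀ 1 + (fderiv ℝ ft z - fderiv ℝ ft x₀) 1 := by
      simp
    have h5' : ‖fderiv ℝ ft x₀ 1‖ = c := by rw [h1]; simp [hcdef]
    calc c / 2 = c - c / 2 := by ring
    _ ≤ ‖fderiv ℝ ft x₀ 1‖ - ‖(fderiv ℝ ft z - fderiv ℝ ft x₀) 1‖ := by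
        rw [h5']; linarith
    _ ≤ ‖fderiv ℝ ft z 1‖ := by
        rw [h4']
        have := norm_add_le (fderiv ℝ ft x₀ 1 + (fderiv ℝ ft z - fderiv ℝ ft x₀) 1)
          (-(fderiv ℝ ft z - fderiv ℝ ft x₀) 1)
        simp only [add_neg_cancel_right, norm_neg] at this
        linarith
  -- comparison |Im ζ| ≥ (c/2)|Im z| on U
  have hU6 : ∀ z ∈ U, (c / 2) * |z.im| ≤ |(ft z).im| := by
    intro z hz
    set F : ℂ → ℂ := fun w => ft w - Lmul w with hF
    have hFdiff : ∀ w : ℂ, DifferentiableAt ℝ F w :=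
      fun w => (hdiff w).sub (Lmul.differentiable w)
    have hFd : ∀ w ∈ U, ‖fderiv ℝ F w‖ ≤ c / 2 := by
      intro w hw
      have : fderiv ℝ F w = fderiv ℝ ft w - Lmul := by
        rw [hF]
        rw [fderiv_fun_sub (hdiff w) (Lmul.differentiable w)]
        rw [Lmul.fderiv]
      rw [this, ← hA0]
      exact (hUsub w hw).2
    have hre : ((z.re : ℝ) : ℂ) ∈ U := by
      have : ‖((z.re : ℝ) : ℂ) - (x₀ : ℂ)‖ ≤ ‖z - (x₀ : ℂ)‖ := by
        rw [← Complex.ofReal_sub]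
        rw [Complex.norm_real]
        have : (z - (x₀ : ℂ)).re = z.re - x₀ := by simp
        rw [← this]
        exact Complex.abs_re_le_norm _
      have hz' : ‖z - (x₀ : ℂ)‖ < r := by simpa [hU, dist_eq_norm] using hz
      simp only [hU, Metric.mem_ball, dist_eq_norm]
      linarith
    have hmvt := Convex.norm_image_sub_le_of_norm_fderiv_le
      (fun w hw => hFdiff w) hFd (convex_ball _ _) hre hz
    have hzre : ‖z - ((z.re : ℝ) : ℂ)‖ = |z.im| := by
      have : z - ((z.re : ℝ) : ℂ) = Complex.I * z.im := by
        apply Complex.ext <;> simp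
      rw [this]
      simp [Complex.norm_real]
    rw [hzre] at hmvt
    have him : |(F z - F ((z.re : ℝ) : ℂ)).im| ≤ ‖F z - F ((z.re : ℝ) : ℂ)‖ :=
      Complex.abs_im_le_norm _
    have hFim : (F z - F ((z.re : ℝ) : ℂ)).im = (ft z).im - c₀ * z.im := by
      have hfr : ft ((z.re : ℝ) : ℂ) = ((f z.re : ℝ) : ℂ) := hreal z.re
      simp [hF, hLapp, hfr]
    rw [hFim] at him
    have hcc : |c₀ * z.im| = c * |z.im| := by rw [abs_mul, hcdef]
    have h7 : |c₀ * z.im| - |(ft z).im| ≤ |(ft z).im - c₀ * z.im| := by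
      have := abs_sub_abs_le_abs_sub (c₀ * z.im) ((ft z).im)
      rw [abs_sub_comm] at this
      linarith
    have := him.trans hmvt
    rw [hcc] at h7
    linarith
  -- smoothness of the inverse near ft x₀
  have hgCD₀ : ContDiffAt ℝ (⊤ : ℕ∞) ph.symm (ft x₀) := by
    refine ph.contDiffAt_symm (f₀' := E₀) hfx₀ ?_ ?_
    · rw [hgx₀]; exact hE
    · rw [hgx₀]; exact hsm.contDiffAt
  obtain ⟨W, hWopen, hWmem, hWg⟩ : ∃ W : Set ℂ, IsOpen W ∧ ft x₀ ∈ W ∧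
      ContDiffOn ℝ (⊤ : ℕ∞) ph.symm W := by
    refine ⟨ph.target ∩ ph.symm ⁻¹' ((fun w => fderiv ℝ ft w) ⁻¹'
      range ((↑) : (ℂ ≃L[ℝ] ℂ) → ℂ →L[ℝ] ℂ)),
      ph.isOpen_inter_preimage_symm (ContinuousLinearEquiv.isOpen.preimage hcont),
      ⟨hfx₀, ?_⟩, ?_⟩
    · exact ⟨E₀, by rw [hgx₀]; exact hE.fderiv.symm⟩
    · rintro ζ ⟨hζt, E', hE'⟩
      refine (ph.contDiffAt_symm (f₀' := E') hζt ?_ hsm.contDiffAt).contDiffWithinAt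
      rw [hph_coe, hE']
      exact (hdiff _).hasFDerivAt
  have hgfd_cont : ContinuousAt (fun ζ => fderiv ℝ (ph.symm : ℂ → ℂ) ζ) (ft x₀) :=
    (hWg.continuousOn_fderiv_of_isOpen hWopen (by norm_num)).continuousAt
      (hWopen.mem_nhds hWmem)
  set K : ℝ := ‖fderiv ℝ (ph.symm : ℂ → ℂ) (ft x₀)‖ + 1 with hK
  have hKpos : 0 < K := by positivity
  -- choose the ball V
  have hVmem : {ζ : ℂ | ζ ∈ ph.target ∧ ph.symm ζ ∈ U ∧ ζ ∈ W ∧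
      ‖fderiv ℝ (ph.symm : ℂ → ℂ) ζ‖ ≤ K} ∈ nhds (ft x₀) := by
    refine Filter.inter_mem (ph.open_target.mem_nhds hfx₀)
      (Filter.inter_mem ?_ (Filter.inter_mem (hWopen.mem_nhds hWmem) ?_))
    · show (ph.symm : ℂ → ℂ) ⁻¹' U ∈ nhds (ft x₀)
      refine (ph.continuousAt_symm hfx₀).preimage_mem_nhds ?_
      rw [hgx₀]
      exact Metric.ball_mem_nhds _ hr
    · have h0 : ∀ᶠ ζ in nhds (ft x₀), fderiv ℝ (ph.symm : ℂ → ℂ) ζ ∈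
          Metric.ball (fderiv ℝ (ph.symm : ℂ → ℂ) (ft x₀)) 1 :=
        hgfd_cont.preimage_mem_nhds (Metric.ball_mem_nhds _ one_pos)
      refine h0.mono fun ζ hζ => ?_
      have : ‖fderiv ℝ (ph.symm : ℂ → ℂ) ζ - fderiv ℝ (ph.symm : ℂ → ℂ) (ft x₀)‖ < 1 := by
        simpa [dist_eq_norm] using hζ
      have h9 := norm_le_norm_add_norm_sub' (fderiv ℝ (ph.symm : ℂ → ℂ) ζ)
        (fderiv ℝ (ph.symm : ℂ → ℂ) (ft x₀))
      show ‖fderiv ℝ (ph.symm : ℂ → ℂ) ζ‖ ≤ K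
      rw [hK]
      linarith
  obtain ⟨ρ, hρ, hballV⟩ := Metric.mem_nhds_iff.1 hVmem
  set V : Set ℂ := Metric.ball (ft x₀) ρ with hV
  have hVsub : ∀ ζ ∈ V, ζ ∈ ph.target ∧ ph.symm ζ ∈ U ∧ ζ ∈ W ∧
      ‖fderiv ℝ (ph.symm : ℂ → ℂ) ζ‖ ≤ K := fun ζ hζ => hballV hζ
  -- assemble the answer
  refine ⟨U, Metric.ball_mem_nhds _ hr, V, ?_, (ph.symm : ℂ → ℂ), ?_, ?_, ?_, ?_, ?_⟩
  · rw [show ((f x₀ : ℝ) : ℂ) = ft x₀ from (hreal x₀).symm]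
    exact Metric.ball_mem_nhds _ hρ
  · -- injectivity
    rw [← hph_coe]
    exact ph.injOn.mono fun z hz => (hUsub z hz).1
  · -- smoothness of the inverse on V
    exact hWg.mono fun ζ hζ => (hVsub ζ hζ).2.2.1
  · -- right inverse
    intro ζ hζ
    refine ⟨(hVsub ζ hζ).2.1, ?_⟩
    rw [← hph_coe]
    exact ph.right_inv (hVsub ζ hζ).1
  · -- left inverse
    intro z hz _
    rw [← hph_coe]
    exact ph.left_inv (hUsub z hz).1
  · -- the dbar estimate
    intro N
    obtain ⟨CN, hCN, hbN⟩ := hest 0 N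
    refine ⟨(4 * K / c) * CN * (2 / c) ^ N + 1, by positivity, ?_⟩
    intro ζ hζ
    obtain ⟨hζt, hzU, hζW, hKb⟩ := hVsub ζ hζ
    set z : ℂ := ph.symm ζ with hz
    have hftz : ft z = ζ := by rw [← hph_coe]; exact ph.right_inv hζt
    -- chain rule : B ∘ A = id
    have hdg : DifferentiableAt ℝ (ph.symm : ℂ → ℂ) ζ :=
      ((hWg ζ hζW).contDiffAt (hWopen.mem_nhds hζW)).differentiableAt (by simp)
    have hcomp : (fderiv ℝ (ph.symm : ℂ → ℂ) ζ).comp (fderiv ℝ ft z)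
        = ContinuousLinearMap.id ℝ ℂ := by
      have hgft : (fun w => (ph.symm : ℂ → ℂ) (ft w)) =ᶠ[nhds z] (fun w => w) := by
        have hzU' : z ∈ U := hzU
        filter_upwards [Metric.isOpen_ball.mem_nhds hzU'] with w hw
        rw [← hph_coe]
        exact ph.left_inv (hUsub w hw).1
      have h1' : fderiv ℝ (fun w => (ph.symm : ℂ → ℂ) (ft w)) z
          = ContinuousLinearMap.id ℝ ℂ := by
        rw [hgft.fderiv_eq, fderiv_id']
      have h2' : fderiv ℝ ((ph.symm : ℂ → ℂ) ∘ ft) z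
          = (fderiv ℝ (ph.symm : ℂ → ℂ) (ft z)).comp (fderiv ℝ ft z) := by
        refine fderiv_comp z ?_ (hdiff z)
        rw [hftz]; exact hdg
      rw [← hftz, ← h1']
      exact h2'.symm
    set B : ℂ →L[ℝ] ℂ := fderiv ℝ (ph.symm : ℂ → ℂ) ζ with hB
    set A : ℂ →L[ℝ] ℂ := fderiv ℝ ft z with hA
    set a1 : ℂ := A 1 with ha1
    set d : ℂ := A 1 + Complex.I * A Complex.I with hd
    have hAI : A Complex.I = Complex.I * a1 - Complex.I * d := by
      rw [hd, ha1]
      linear_combination (A Complex.I) * Complex.I_sq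
    have eq1 : B a1 = 1 := by
      have := congrArg (fun (L : ℂ →L[ℝ] ℂ) => L 1) hcomp
      simpa [ha1] using this
    have eq2 : B (A Complex.I) = Complex.I := by
      have := congrArg (fun (L : ℂ →L[ℝ] ℂ) => L Complex.I) hcomp
      simpa using this
    -- translate into scalar equations
    have eq1' : (a1.re : ℂ) * B 1 + (a1.im : ℂ) * B Complex.I = 1 := by
      rw [← Complex.real_smul, ← Complex.real_smul, ← clm_decomp]
      exact eq1
    have eq2' : (((d.im - a1.im : ℝ)) : ℂ) * B 1 + (((a1.re - d.re : ℝ)) : ℂ) * B Complex.I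
        = Complex.I := by
      have hw1 : (Complex.I * a1 - Complex.I * d).re = d.im - a1.im := by
        simp [Complex.sub_re, Complex.mul_re]; try ring
      have hw2 : (Complex.I * a1 - Complex.I * d).im = a1.re - d.re := by
        simp [Complex.sub_im, Complex.mul_im]; try ring
      calc (((d.im - a1.im : ℝ)) : ℂ) * B 1 + (((a1.re - d.re : ℝ)) : ℂ) * B Complex.I
          = B (Complex.I * a1 - Complex.I * d) := by
            rw [clm_decomp B (Complex.I * a1 - Complex.I * d), hw1, hw2,
              Complex.real_smul, Complex.real_smul]
      _ = B (A Complex.I) := by rw [hAI]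
      _ = Complex.I := eq2
    push_cast at eq2'
    have key : (starRingEnd ℂ) a1 * (B 1 + Complex.I * B Complex.I)
        = -Complex.I * ((d.im : ℂ) * B 1 - (d.re : ℂ) * B Complex.I) := by
      have ha1' : (starRingEnd ℂ) a1 = (a1.re : ℂ) - (a1.im : ℂ) * Complex.I := by
        apply Complex.ext <;> simp
      rw [ha1']
      linear_combination eq1' + Complex.I * eq2'
        + (1 - (a1.im : ℂ) * B Complex.I) * Complex.I_sq
    -- norms
    have hnB1 : ‖B 1‖ ≤ K := le_trans (by simpa using B.le_opNorm 1) (by simpa using hKb)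
    have hnBI : ‖B Complex.I‖ ≤ K := by
      refine le_trans (le_trans (B.le_opNorm Complex.I) ?_) hKb
      simp [Complex.norm_I]
    have hnd : ‖d‖ ≤ CN * |z.im| ^ N := by
      have := hbN z (hUim z hzU)
      rwa [norm_iteratedFDeriv_zero] at this
    have hna1 : c / 2 ≤ ‖a1‖ := hU5 z hzU
    have him : |z.im| ≤ (2 / c) * |ζ.im| := by
      have := hU6 z hzU
      rw [hftz] at this
      rw [div_mul_eq_mul_div, le_div_iff₀ hc]
      linarith
    have hkey := congrArg norm key
    rw [norm_mul, norm_mul, RCLike.norm_conj] at hkey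
    have hrhs : ‖(d.im : ℂ) * B 1 - (d.re : ℂ) * B Complex.I‖ ≤ 2 * ‖d‖ * K := by
      have h1'' : ‖(d.im : ℂ) * B 1‖ ≤ ‖d‖ * K := by
        rw [norm_mul, Complex.norm_real]
        have := Complex.abs_im_le_norm d
        have hB1 := hnB1
        have : |d.im| ≤ ‖d‖ := by simpa using Complex.abs_im_le_norm d
        exact mul_le_mul this hB1 (norm_nonneg _) (norm_nonneg _)
      have h2'' : ‖(d.re : ℂ) * B Complex.I‖ ≤ ‖d‖ * K := by
        rw [norm_mul, Complex.norm_real]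
        have : |d.re| ≤ ‖d‖ := by simpa using Complex.abs_re_le_norm d
        exact mul_le_mul this hnBI (norm_nonneg _) (norm_nonneg _)
      calc ‖(d.im : ℂ) * B 1 - (d.re : ℂ) * B Complex.I‖
          ≤ ‖(d.im : ℂ) * B 1‖ + ‖(d.re : ℂ) * B Complex.I‖ := norm_sub_le _ _
      _ ≤ 2 * ‖d‖ * K := by linarith
    have hnormI : ‖-Complex.I‖ = 1 := by simp
    rw [hnormI, one_mul] at hkey
    have hmain : ‖B 1 + Complex.I * B Complex.I‖ ≤ (4 * K / c) * ‖d‖ := by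
      have hpos : (0:ℝ) < ‖a1‖ := lt_of_lt_of_le (by linarith) hna1
      have h5 : ‖a1‖ * ‖B 1 + Complex.I * B Complex.I‖ ≤ 2 * ‖d‖ * K := by
        rw [hkey]; exact hrhs
      have h6 : (c / 2) * ‖B 1 + Complex.I * B Complex.I‖ ≤ 2 * ‖d‖ * K := by
        refine le_trans (mul_le_mul_of_nonneg_right hna1 (norm_nonneg _)) h5
      have hXeq : ‖B 1 + Complex.I * B Complex.I‖
          = (2 / c) * ((c / 2) * ‖B 1 + Complex.I * B Complex.I‖) := by
        field_simp
      rw [hXeq]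
      calc (2 / c) * ((c / 2) * ‖B 1 + Complex.I * B Complex.I‖)
          ≤ (2 / c) * (2 * ‖d‖ * K) := by
            refine mul_le_mul_of_nonneg_left h6 (by positivity)
      _ = (4 * K / c) * ‖d‖ := by ring
    have hfinal : ‖B 1 + Complex.I * B Complex.I‖
        ≤ (4 * K / c) * CN * (2 / c) ^ N * |ζ.im| ^ N := by
      have h7 : ‖d‖ ≤ CN * ((2 / c) * |ζ.im|) ^ N := by
        refine le_trans hnd ?_
        refine mul_le_mul_of_nonneg_left ?_ (le_of_lt hCN)
        exact pow_le_pow_left₀ (abs_nonneg _) him N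
      calc ‖B 1 + Complex.I * B Complex.I‖ ≤ (4 * K / c) * ‖d‖ := hmain
      _ ≤ (4 * K / c) * (CN * ((2 / c) * |ζ.im|) ^ N) := by
          refine mul_le_mul_of_nonneg_left h7 (by positivity)
      _ = (4 * K / c) * CN * (2 / c) ^ N * |ζ.im| ^ N := by
          rw [mul_pow]; ring
    refine le_trans hfinal ?_
    have hp0 : (0:ℝ) ≤ |ζ.im| ^ N := by positivity
    have hcoef : (4 * K / c) * CN * (2 / c) ^ N ≤ (4 * K / c) * CN * (2 / c) ^ N + 1 := by
      linarith
    exact mul_le_mul_of_nonneg_right hcoef hp0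
end
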